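/- Let μ > 0, λ > 0, τ > 0, N ≥ 1. Let a¹, …, a^N and b¹, …, b^N be arbitrary periodic grid functions (the frozen coefficients), and let u⁰, …, u^N and w⁰, …, w^N be periodic grid functions satisfying the linearized compact difference scheme: (i) w^k_p = (δ_xx u^k)_p − (h²/12)(δ_xx w^k)_p for all 0 ≤ k ≤ N and p ∈ ℤ; (ii) for all 1 ≤ k ≤ N and p ∈ ℤ, with ū^k = (u^k + u^{k−1})/2 and w̄^k = (w^k + w^{k−1})/2: (u^k_p − u^{k−1}_p)/τ − μ·(w^k_p − w^{k−1}_p)/τ + Ψ(a^k, ū^k)_p − (h²/2)·Ψ(b^k, ū^k)_p + (Δ_x ū^k)_p − (h²/6)·(Δ_x w̄^k)_p − λ·w̄^k_p = 0. Define the discrete energy E^k = ‖u^k‖² + μ·( |u^k|_1² + (h²/12)‖w^k‖² − (h⁴/144)|w^k|_1² ) + 2λτ·∑_{n=1}^{k} ( |ū^n|_1² + (h²/12)‖w̄^n‖² − (h⁴/144)|w̄^n|_1² ). Then E^k = E⁰ for all 0 ≤ k ≤ N. -/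

import Mathlib

open Finset

/-- A periodic grid function with period `M`. -/
def Periodic (M : ℕ) (w : ℤ → ℝ) : Prop := ∀ p : ℤ, w (p + (M : ℤ)) = w p

/-- Discrete inner product `⟨v,w⟩ = h ∑_{p=1}^M v_p w_p`. -/
noncomputable def ip (M : ℕ) (h : ℝ) (v w : ℤ → ℝ) : ℝ :=
  h * ∑ p ∈ Finset.Icc (1 : ℤ) (M : ℤ), v p * w p

/-- Discrete L² norm `‖w‖ = √⟨w,w⟩`. -/
noncomputable def nrm (M : ℕ) (h : ℝ) (w : ℤ → ℝ) : ℝ := Real.sqrt (ip M h w w)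

/-- Discrete H¹ seminorm `|w|₁`. -/
noncomputable def snorm1 (M : ℕ) (h : ℝ) (w : ℤ → ℝ) : ℝ :=
  Real.sqrt (h * ∑ p ∈ Finset.Icc (1 : ℤ) (M : ℤ), ((w p - w (p - 1)) / h) ^ 2)

/-- Centered difference operator `(Δ_x w)_p = (w_{p+1} − w_{p−1})/(2h)`. -/
noncomputable def Dx (h : ℝ) (w : ℤ → ℝ) : ℤ → ℝ :=
  fun p => (w (p + 1) - w (p - 1)) / (2 * h)

/-- Second difference operator `(δ_xx w)_p = (w_{p+1} − 2w_p + w_{p−1})/h²`. -/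
noncomputable def Dxx (h : ℝ) (w : ℤ → ℝ) : ℤ → ℝ :=
  fun p => (w (p + 1) - 2 * w p + w (p - 1)) / h ^ 2

/-- Discrete nonlinear operator `Ψ(v,w)_p = (1/3)(v_p (Δ_x w)_p + (Δ_x (vw))_p)`. -/
noncomputable def Psi (h : ℝ) (v w : ℤ → ℝ) : ℤ → ℝ :=
  fun p => (1 / 3) * (v p * Dx h w p + Dx h (fun q => v q * w q) p)
/-- Discrete energy `E^q` of the compact difference scheme. -/
noncomputable def energy (M : ℕ) (h μ lam τ : ℝ) (u w : ℕ → ℤ → ℝ) (q : ℕ) : ℝ :=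
  (nrm M h (u q)) ^ 2
    + μ * ((snorm1 M h (u q)) ^ 2 + h ^ 2 / 12 * (nrm M h (w q)) ^ 2
            - h ^ 4 / 144 * (snorm1 M h (w q)) ^ 2)
    + 2 * lam * τ *
        ∑ n ∈ Finset.Icc 1 q,
          ((snorm1 M h (fun p => (u n p + u (n - 1) p) / 2)) ^ 2
            + h ^ 2 / 12 * (nrm M h (fun p => (w n p + w (n - 1) p) / 2)) ^ 2
            - h ^ 4 / 144 * (snorm1 M h (fun p => (w n p + w (n - 1) p) / 2)) ^ 2)


/-!
Energy method: pair the scheme at step `k` with `2τ ū^k`. Periodic summation by parts makes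
`Δ_x` skew-adjoint and `δ_xx` symmetric, with `⟨δ_xx v, w⟩ = -[v, w]₁` for the inner product
`[·,·]₁` of `|·|₁`, so the convective terms `⟨Δ_x ū, ū⟩` and `⟨Ψ(c, ū), ū⟩` vanish. The compact relation `w = δ_xx u - (h²/12) δ_xx w` gives
`⟨w₁, u₂⟩ = -[u₁, u₂]₁ - (h²/12)⟨w₁, w₂⟩ + (h⁴/144)[w₁, w₂]₁`, which is symmetric in the two pairs:
it turns the `μ`-term into a difference of compact energies and the `λ`-term into their
dissipation, and, as `Δ_x` commutes with `δ_xx`, it makes `⟨Δ_x w̄, ū⟩` symmetric as well as skew,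
hence zero.
-/

theorem sum_Icc_one_sub (g : ℤ → ℝ) (n : ℕ) :
    ∑ p ∈ Icc 1 (n : ℤ), (g (p + 1) - g p) = g (n + 1) - g 1 := by
  induction n with
  | zero => simp
  | succ n ih =>
    push_cast
    rw [← insert_Icc_right_eq_Icc_add_one (by omega), sum_insert (by simp), ih]
    ring

section Periodic

variable {M : ℕ} {h : ℝ}

theorem Periodic.sum_Icc_one_sub_eq_zero {g : ℤ → ℝ} (hg : Periodic M g) :
    ∑ p ∈ Icc 1 (M : ℤ), (g (p + 1) - g p) = 0 := by
  rw [sum_Icc_one_sub, add_comm, hg, sub_self]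

theorem Periodic.Dx {u : ℤ → ℝ} (hu : Periodic M u) : Periodic M (Dx h u) :=
  fun p => by rw [_root_.Dx, _root_.Dx, add_right_comm, add_sub_right_comm, hu, hu]

end Periodic

noncomputable def ip1 (M : ℕ) (h : ℝ) (v w : ℤ → ℝ) : ℝ :=
  h * ∑ p ∈ Icc (1 : ℤ) (M : ℤ), (v p - v (p - 1)) / h * ((w p - w (p - 1)) / h)

section InnerProduct

variable {M : ℕ} {h : ℝ}

theorem ip_comm (v w : ℤ → ℝ) : ip M h v w = ip M h w v := by
  simp only [ip, mul_comm (v _)]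

theorem ip1_comm (v w : ℤ → ℝ) : ip1 M h v w = ip1 M h w v := by
  simp only [ip1, mul_comm ((v _ - _) / h)]

theorem nrm_sq (hh : 0 ≤ h) (v : ℤ → ℝ) : nrm M h v ^ 2 = ip M h v v :=
  Real.sq_sqrt (mul_nonneg hh (sum_nonneg fun _ _ => mul_self_nonneg _))

theorem snorm1_sq (hh : 0 ≤ h) (v : ℤ → ℝ) : snorm1 M h v ^ 2 = ip1 M h v v := by
  rw [snorm1, Real.sq_sqrt (mul_nonneg hh (sum_nonneg fun _ _ => sq_nonneg _)), ip1]
  simp only [sq]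

theorem ip_add_left (f g v : ℤ → ℝ) :
    ip M h (fun p => f p + g p) v = ip M h f v + ip M h g v := by
  simp only [ip, add_mul, sum_add_distrib, mul_add]

theorem ip_sub_left (f g v : ℤ → ℝ) :
    ip M h (fun p => f p - g p) v = ip M h f v - ip M h g v := by
  simp only [ip, sub_mul, sum_sub_distrib, mul_sub]

theorem ip_mul_left (c : ℝ) (f v : ℤ → ℝ) :
    ip M h (fun p => c * f p) v = c * ip M h f v := by
  simp only [ip, mul_assoc, ← mul_sum]
  ring

theorem ip_Dx_left {v w : ℤ → ℝ} (hv : Periodic M v) (hw : Periodic M w) :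
    ip M h (Dx h v) w = -ip M h v (Dx h w) := by
  have hg : Periodic M fun p => v p * w (p - 1) + v (p - 1) * w p :=
    (Function.Periodic.mul hv (Function.Periodic.sub_const hw 1)).add
      ((Function.Periodic.sub_const hv 1).mul hw)
  have telescope : ∀ p, Dx h v p * w p + v p * Dx h w p
      = (v (p + 1) * w (p + 1 - 1) + v (p + 1 - 1) * w (p + 1)
          - (v p * w (p - 1) + v (p - 1) * w p)) / (2 * h) := by
    intro p
    simp only [Dx, add_sub_cancel_right]
    ring
  rw [eq_neg_iff_add_eq_zero, ip, ip, ← mul_add, ← sum_add_distrib]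
  simp only [telescope, ← sum_div, hg.sum_Icc_one_sub_eq_zero, zero_div, mul_zero]

theorem ip_Dxx_left {v w : ℤ → ℝ} (hv : Periodic M v) (hw : Periodic M w) :
    ip M h (Dxx h v) w = -ip1 M h v w := by
  have hg : Periodic M fun p => (v p - v (p - 1)) * w (p - 1) :=
    (Function.Periodic.sub hv (Function.Periodic.sub_const hv 1)).mul
      (Function.Periodic.sub_const hw 1)
  have telescope : ∀ p, Dxx h v p * w p + (v p - v (p - 1)) / h * ((w p - w (p - 1)) / h)
      = ((v (p + 1) - v (p + 1 - 1)) * w (p + 1 - 1) - (v p - v (p - 1)) * w (p - 1))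
          / h ^ 2 := by
    intro p
    simp only [Dxx, add_sub_cancel_right]
    ring
  rw [eq_neg_iff_add_eq_zero, ip, ip1, ← mul_add, ← sum_add_distrib]
  simp only [telescope, ← sum_div, hg.sum_Icc_one_sub_eq_zero, zero_div, mul_zero]

theorem ip_Dx_self {v : ℤ → ℝ} (hv : Periodic M v) : ip M h (Dx h v) v = 0 := by
  have skew := ip_Dx_left (h := h) hv hv
  rw [ip_comm v] at skew
  linarith

theorem ip_Dxx_comm {v w : ℤ → ℝ} (hv : Periodic M v) (hw : Periodic M w) :
    ip M h (Dxx h v) w = ip M h v (Dxx h w) := by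
  rw [ip_Dxx_left hv hw, ip_comm v, ip_Dxx_left hw hv, ip1_comm]

theorem ip_Psi_self {c v : ℤ → ℝ} (hc : Periodic M c) (hv : Periodic M v) :
    ip M h (Psi h c v) v = 0 := by
  have hcv : Periodic M fun p => c p * v p := Function.Periodic.mul hc hv
  have split : ip M h (Psi h c v) v
      = (ip M h (Dx h v) (fun p => c p * v p) + ip M h (Dx h fun p => c p * v p) v) / 3 := by
    simp only [ip, Psi, ← mul_add, ← sum_add_distrib, sum_div, mul_div_assoc]
    congr 1
    exact sum_congr rfl fun p _ => by ring
  rw [split, ip_Dx_left hcv hv, ip_comm (Dx h v)]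
  ring

end InnerProduct

/-- `w` is the fourth-order compact approximation `(1 + h²/12 δ_xx)⁻¹ δ_xx u` of `u_xx`. -/
def CompactDxx (h : ℝ) (u w : ℤ → ℝ) : Prop :=
  ∀ p, w p = Dxx h u p - h ^ 2 / 12 * Dxx h w p

noncomputable def compactEnergy (M : ℕ) (h : ℝ) (u w : ℤ → ℝ) : ℝ :=
  snorm1 M h u ^ 2 + h ^ 2 / 12 * nrm M h w ^ 2 - h ^ 4 / 144 * snorm1 M h w ^ 2

namespace CompactDxx

variable {M : ℕ} {h : ℝ} {u w u₁ w₁ u₂ w₂ : ℤ → ℝ}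

theorem ip_eq (hr₁ : CompactDxx h u₁ w₁) (hr₂ : CompactDxx h u₂ w₂)
    (hu₁ : Periodic M u₁) (hw₁ : Periodic M w₁) (hu₂ : Periodic M u₂) (hw₂ : Periodic M w₂) :
    ip M h w₁ u₂
      = -ip1 M h u₁ u₂ - h ^ 2 / 12 * ip M h w₁ w₂ + h ^ 4 / 144 * ip1 M h w₁ w₂ := by
  have hDxx₂ : Dxx h u₂ = fun p => w₂ p + h ^ 2 / 12 * Dxx h w₂ p :=
    funext fun p => by linarith [hr₂ p]
  calc ip M h w₁ u₂ = ip M h (fun p => Dxx h u₁ p - h ^ 2 / 12 * Dxx h w₁ p) u₂ := by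
        rw [← funext hr₁]
    _ = -ip1 M h u₁ u₂ - h ^ 2 / 12 * ip M h (Dxx h u₂) w₁ := by
        rw [ip_sub_left, ip_mul_left, ip_Dxx_left hu₁ hu₂, ip_Dxx_comm hw₁ hu₂, ip_comm w₁]
    _ = _ := by
        rw [hDxx₂, ip_add_left, ip_mul_left, ip_Dxx_left hw₂ hw₁, ip_comm w₂, ip1_comm w₂]
        ring

theorem ip_symm (hr₁ : CompactDxx h u₁ w₁) (hr₂ : CompactDxx h u₂ w₂)
    (hu₁ : Periodic M u₁) (hw₁ : Periodic M w₁) (hu₂ : Periodic M u₂) (hw₂ : Periodic M w₂) :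
    ip M h w₁ u₂ = ip M h w₂ u₁ := by
  rw [hr₁.ip_eq hr₂ hu₁ hw₁ hu₂ hw₂, hr₂.ip_eq hr₁ hu₂ hw₂ hu₁ hw₁, ip1_comm u₁, ip_comm w₁,
    ip1_comm w₁]

theorem ip_self (hh : 0 ≤ h) (hr : CompactDxx h u w) (hu : Periodic M u) (hw : Periodic M w) :
    ip M h w u = -compactEnergy M h u w := by
  rw [hr.ip_eq hr hu hw hu hw, compactEnergy, nrm_sq hh, snorm1_sq hh, snorm1_sq hh]
  ring

theorem midpoint {u₀ w₀ ubar wbar : ℤ → ℝ} (hr₀ : CompactDxx h u₀ w₀) (hr₁ : CompactDxx h u₁ w₁)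
    (hubar : ∀ p, ubar p = (u₁ p + u₀ p) / 2) (hwbar : ∀ p, wbar p = (w₁ p + w₀ p) / 2) :
    CompactDxx h ubar wbar := fun p => by
  simp only [CompactDxx, Dxx] at hr₀ hr₁ ⊢
  simp only [hubar, hwbar]
  linear_combination (hr₁ p + hr₀ p) / 2

theorem Dx (hr : CompactDxx h u w) : CompactDxx h (Dx h u) (Dx h w) := fun p => by
  have next := hr (p + 1)
  have prev := hr (p - 1)
  simp only [Dxx, _root_.Dx, add_sub_cancel_right, sub_add_cancel] at next prev ⊢
  linear_combination (next - prev) / (2 * h)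

theorem ip_Dx_eq_zero (hr : CompactDxx h u w) (hu : Periodic M u) (hw : Periodic M w) :
    ip M h (_root_.Dx h w) u = 0 := by
  have skew := ip_Dx_left (h := h) hw hu
  have symm := hr.Dx.ip_symm hr hu.Dx hw.Dx hu hw
  linarith

end CompactDxx

theorem compactEnergy_step {M : ℕ} {h μ lam τ : ℝ} {a b u₀ u₁ w₀ w₁ ubar wbar : ℤ → ℝ}
    (hh : 0 ≤ h) (hτ : τ ≠ 0) (ha : Periodic M a) (hb : Periodic M b)
    (hu₀ : Periodic M u₀) (hu₁ : Periodic M u₁) (hw₀ : Periodic M w₀) (hw₁ : Periodic M w₁)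
    (hr₀ : CompactDxx h u₀ w₀) (hr₁ : CompactDxx h u₁ w₁)
    (hubar : ∀ p, ubar p = (u₁ p + u₀ p) / 2) (hwbar : ∀ p, wbar p = (w₁ p + w₀ p) / 2)
    (hscheme : ∀ p, (u₁ p - u₀ p) / τ - μ * ((w₁ p - w₀ p) / τ) + Psi h a ubar p
      - h ^ 2 / 2 * Psi h b ubar p + Dx h ubar p - h ^ 2 / 6 * Dx h wbar p - lam * wbar p = 0) :
    nrm M h u₁ ^ 2 + μ * compactEnergy M h u₁ w₁ + 2 * lam * τ * compactEnergy M h ubar wbar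
      = nrm M h u₀ ^ 2 + μ * compactEnergy M h u₀ w₀ := by
  have hubar_per : Periodic M ubar := fun p => by rw [hubar, hubar, hu₀, hu₁]
  have hwbar_per : Periodic M wbar := fun p => by rw [hwbar, hwbar, hw₀, hw₁]
  have hrbar : CompactDxx h ubar wbar := hr₀.midpoint hr₁ hubar hwbar
  have paired : ip M h u₁ u₁ - ip M h u₀ u₀
      - μ * (ip M h w₁ u₁ + ip M h w₁ u₀ - ip M h w₀ u₁ - ip M h w₀ u₀)
      + 2 * τ * (ip M h (Psi h a ubar) ubar - h ^ 2 / 2 * ip M h (Psi h b ubar) ubar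
        + ip M h (Dx h ubar) ubar - h ^ 2 / 6 * ip M h (Dx h wbar) ubar - lam * ip M h wbar ubar)
      = 0 := by
    have scheme_sum : ∑ p ∈ Icc 1 (M : ℤ), 2 * τ * ubar p * ((u₁ p - u₀ p) / τ
        - μ * ((w₁ p - w₀ p) / τ) + Psi h a ubar p - h ^ 2 / 2 * Psi h b ubar p + Dx h ubar p
        - h ^ 2 / 6 * Dx h wbar p - lam * wbar p) = 0 :=
      sum_eq_zero fun p _ => by rw [hscheme, mul_zero]
    rw [← mul_zero h, ← scheme_sum]
    simp only [ip, mul_sum, ← sum_add_distrib, ← sum_sub_distrib]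
    refine sum_congr rfl fun p _ => ?_
    rw [hubar]
    field_simp
    ring
  rw [hr₁.ip_self hh hu₁ hw₁, hr₀.ip_self hh hu₀ hw₀, hr₁.ip_symm hr₀ hu₁ hw₁ hu₀ hw₀,
    ip_Psi_self ha hubar_per, ip_Psi_self hb hubar_per, ip_Dx_self hubar_per,
    hrbar.ip_Dx_eq_zero hubar_per hwbar_per, hrbar.ip_self hh hubar_per hwbar_per] at paired
  rw [nrm_sq hh, nrm_sq hh]
  linear_combination paired

theorem stmt_15_general (M : ℕ) (h : ℝ) (hh : 0 < h)
    (μ lam τ : ℝ) (hτ : 0 < τ)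
    (N : ℕ) (a b : ℕ → ℤ → ℝ) (u w : ℕ → ℤ → ℝ)
    (ha : ∀ k, 1 ≤ k → k ≤ N → Periodic M (a k))
    (hb : ∀ k, 1 ≤ k → k ≤ N → Periodic M (b k))
    (hu : ∀ k ≤ N, Periodic M (u k)) (hw : ∀ k ≤ N, Periodic M (w k))
    (hrel : ∀ k ≤ N, ∀ p : ℤ, w k p = Dxx h (u k) p - h ^ 2 / 12 * Dxx h (w k) p)
    (hscheme : ∀ k, 1 ≤ k → k ≤ N → ∀ p : ℤ,
      (u k p - u (k - 1) p) / τ - μ * ((w k p - w (k - 1) p) / τ)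
        + Psi h (a k) (fun r => (u k r + u (k - 1) r) / 2) p
        - h ^ 2 / 2 * Psi h (b k) (fun r => (u k r + u (k - 1) r) / 2) p
        + Dx h (fun r => (u k r + u (k - 1) r) / 2) p
        - h ^ 2 / 6 * Dx h (fun r => (w k r + w (k - 1) r) / 2) p
        - lam * ((w k p + w (k - 1) p) / 2) = 0) :
    ∀ k ≤ N, energy M h μ lam τ u w k = energy M h μ lam τ u w 0 := by
  intro k hk
  induction k with
  | zero => rfl
  | succ m ih =>
    have hm : m ≤ N := by omega
    have step := compactEnergy_step hh.le hτ.ne' (ha (m + 1) (by omega) hk)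
      (hb (m + 1) (by omega) hk) (hu m hm) (hu (m + 1) hk) (hw m hm) (hw (m + 1) hk)
      (hrel m hm) (hrel (m + 1) hk) (fun _ => rfl) (fun _ => rfl) (hscheme (m + 1) (by omega) hk)
    rw [← ih hm, energy, energy, sum_Icc_succ_top (by omega), Nat.add_sub_cancel]
    unfold compactEnergy at step
    linear_combination step

/-- energy conservation of the linearized compact difference scheme
with frozen coefficients `a`, `b`. -/
theorem stmt_15 (M : ℕ) (hM : 3 ≤ M) (h : ℝ) (hh : 0 < h) (L : ℝ) (hL : L = M * h)
    (μ lam τ : ℝ) (hμ : 0 < μ) (hlam : 0 < lam) (hτ : 0 < τ)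
    (N : ℕ) (hN : 1 ≤ N) (a b : ℕ → ℤ → ℝ) (u w : ℕ → ℤ → ℝ)
    (ha : ∀ k, 1 ≤ k → k ≤ N → Periodic M (a k))
    (hb : ∀ k, 1 ≤ k → k ≤ N → Periodic M (b k))
    (hu : ∀ k ≤ N, Periodic M (u k)) (hw : ∀ k ≤ N, Periodic M (w k))
    (hrel : ∀ k ≤ N, ∀ p : ℤ, w k p = Dxx h (u k) p - h ^ 2 / 12 * Dxx h (w k) p)
    (hscheme : ∀ k, 1 ≤ k → k ≤ N → ∀ p : ℤ,
      (u k p - u (k - 1) p) / τ - μ * ((w k p - w (k - 1) p) / τ)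
        + Psi h (a k) (fun r => (u k r + u (k - 1) r) / 2) p
        - h ^ 2 / 2 * Psi h (b k) (fun r => (u k r + u (k - 1) r) / 2) p
        + Dx h (fun r => (u k r + u (k - 1) r) / 2) p
        - h ^ 2 / 6 * Dx h (fun r => (w k r + w (k - 1) r) / 2) p
        - lam * ((w k p + w (k - 1) p) / 2) = 0) :
    ∀ k ≤ N, energy M h μ lam τ u w k = energy M h μ lam τ u w 0 :=
  stmt_15_general M h hh μ lam τ hτ N a b u w ha hb hu hw hrel hscheme
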